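/- Let (τ_m)_{m ≥ m₀} be a sequence of d-tuples in {1,2,3}^d. Define a decreasing sequence of m-boxes by choosing an arbitrary m₀-box B_{m₀} and setting inductively B_{m+1} := B_m(τ_m). Then ⋂_{m ≥ m₀} B_m ≠ ∅ if and only if for every 1 ≤ i ≤ d there exist infinitely many integers m with τ_m(i) ∈ {1,2}. -/
import Mathlib


open MeasureTheory Set
open scoped ENNReal NNReal Classical

noncomputable section

/-- Heights of the towers of the infinite Chacon transformation
(tower `0` is `[0,1)` with a single level, so `chaconH 1 = 8`). -/
def chaconH : ℕ → ℕ
  | 0 => 1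
  | n + 1 => 2 * (3 * chaconH n + 1)

/-- Left endpoint of level `k` of tower `n`.  At step `n+1`, tower `n` (which fills
`[0, hₙ·3⁻ⁿ)`) is cut into three subcolumns of equal width; one spacer is added above the
middle subcolumn and `3hₙ+1` spacers above the third one, the spacers being taken
successively as the leftmost intervals of length `3⁻⁽ⁿ⁺¹⁾` in the unused part of `ℝ₊`;
then the three subcolumns are stacked left under right. -/
def chaconL : ℕ → ℕ → ℝ
  | 0, _ => 0
  | n + 1, k =>
      if k < chaconH n then chaconL n k
      else if k < 2 * chaconH n then chaconL n (k - chaconH n) + (3 : ℝ)⁻¹ ^ (n + 1)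
      else if k = 2 * chaconH n then (chaconH n : ℝ) * (3 : ℝ)⁻¹ ^ n
      else if k ≤ 3 * chaconH n then
        chaconL n (k - 2 * chaconH n - 1) + 2 * (3 : ℝ)⁻¹ ^ (n + 1)
      else (chaconH n : ℝ) * (3 : ℝ)⁻¹ ^ n
        + ((k : ℝ) - 3 * (chaconH n : ℝ)) * (3 : ℝ)⁻¹ ^ (n + 1)

/-- Level `k` of tower `n`: an interval of length `3⁻ⁿ`, closed to the left and open to
the right. -/
def chaconLevel (n k : ℕ) : Set ℝ := Ico (chaconL n k) (chaconL n k + (3 : ℝ)⁻¹ ^ n)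

/-- The Chacon transformation on `ℝ`: each point of a non-top level of some tower is sent
to the point directly above it (the value does not depend on the choice of the tower). -/
def chaconT0 (x : ℝ) : ℝ :=
  if h : ∃ p : ℕ × ℕ, p.2 + 1 < chaconH p.1 ∧ x ∈ chaconLevel p.1 p.2 then
    x - chaconL h.choose.1 h.choose.2 + chaconL h.choose.1 (h.choose.2 + 1)
  else x

/-- The inverse of the Chacon transformation on `ℝ`. -/
def chaconT0inv (x : ℝ) : ℝ :=
  if h : ∃ p : ℕ × ℕ, p.2 + 1 < chaconH p.1 ∧ x ∈ chaconLevel p.1 (p.2 + 1) then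
    x - chaconL h.choose.1 (h.choose.2 + 1) + chaconL h.choose.1 h.choose.2
  else x

/-- The space `X = ℝ₊`. -/
abbrev ChaconX : Type := ↥(Set.Ici (0 : ℝ))

/-- The infinite Chacon transformation `T` on `X = ℝ₊`. -/
def chaconT (x : ChaconX) : ChaconX :=
  ⟨max 0 (chaconT0 (x : ℝ)), Set.mem_Ici.mpr (le_max_left 0 _)⟩

/-- The inverse `T⁻¹` of the Chacon transformation on `X = ℝ₊`. -/
def chaconTinv (x : ChaconX) : ChaconX :=
  ⟨max 0 (chaconT0inv (x : ℝ)), Set.mem_Ici.mpr (le_max_left 0 _)⟩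

/-- Integer powers `T^j` of the Chacon transformation. -/
def chaconTZ (j : ℤ) : ChaconX → ChaconX :=
  if 0 ≤ j then chaconT^[j.toNat] else chaconTinv^[(-j).toNat]

/-- Lebesgue measure `μ` on `X = ℝ₊`. -/
def chaconMu : Measure ChaconX := volume.comap Subtype.val

/-- `C n`: the bottom half of tower `n` (its lowest `hₙ/2` levels), as a subset of `X`. -/
def chaconC (n : ℕ) : Set ChaconX :=
  {x | ∃ k, k < chaconH n / 2 ∧ (x : ℝ) ∈ chaconLevel n k}

/-- `tₙ x ∈ {1,2,3}`: the subcolumn of tower `n` containing `x`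
(junk value `0` if `x` is not in tower `n`). -/
def chaconTn (n : ℕ) (x : ChaconX) : ℕ :=
  if h : ∃ k, k < chaconH n ∧ (x : ℝ) ∈ chaconLevel n k then
    1 + (⌊((x : ℝ) - chaconL n h.choose) * (3 : ℝ) ^ (n + 1)⌋).toNat
  else 0

/-- The Cartesian power `T^{×ι}` of the Chacon transformation, acting coordinatewise. -/
def chaconTd (ι : Type) (x : ι → ChaconX) : ι → ChaconX := fun i => chaconT (x i)

/-- Integer powers `(T^{×ι})^j`, acting coordinatewise. -/
def chaconTdZ (ι : Type) (j : ℤ) (x : ι → ChaconX) : ι → ChaconX := fun i => chaconTZ j (x i)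

/-- `Cₙ^ι ⊆ X^ι`. -/
def chaconCd (ι : Type) (n : ℕ) : Set (ι → ChaconX) := {x | ∀ i, x i ∈ chaconC n}

/-- An `n`-box: a Cartesian product of levels of `C n`. -/
def IsNBox (ι : Type) (n : ℕ) (B : Set (ι → ChaconX)) : Prop :=
  ∃ k : ι → ℕ, (∀ i, k i < chaconH n / 2) ∧
    B = {x : ι → ChaconX | ∀ i, ((x i : ℝ)) ∈ chaconLevel n (k i)}

/-- An `n`-diagonal: a maximal finite family of `n`-boxes `B, T^{×d}B, …, (T^{×d})^ℓ B`,
regarded as the union of its boxes. -/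
def IsNDiagonal (ι : Type) (n : ℕ) (D : Set (ι → ChaconX)) : Prop :=
  ∃ (B : Set (ι → ChaconX)) (ℓ : ℕ),
    (∀ j : ℕ, j ≤ ℓ → IsNBox ι n (chaconTdZ ι (j : ℤ) '' B)) ∧
    ¬ chaconTdZ ι (-1) '' B ⊆ chaconCd ι n ∧
    ¬ chaconTdZ ι ((ℓ : ℤ) + 1) '' B ⊆ chaconCd ι n ∧
    D = ⋃ j ∈ Finset.range (ℓ + 1), chaconTdZ ι (j : ℤ) '' B

/-- A measure is boundedly finite if bounded (measurable) sets have finite measure. -/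
def BoundedlyFinite {α : Type*} [MeasurableSpace α] [PseudoMetricSpace α]
    (σ : Measure α) : Prop :=
  ∀ A : Set α, MeasurableSet A → Bornology.IsBounded A → σ A < ⊤

/-- Diagonal measures on `X^ι`: boundedly finite, `T^{×ι}`-invariant measures which are,
for every large enough `n`, concentrated on a single `n`-diagonal inside `Cₙ^ι`. -/
def IsDiagonalMeasure (ι : Type) [Fintype ι] (σ : Measure (ι → ChaconX)) : Prop :=
  BoundedlyFinite σ ∧ σ.map (chaconTd ι) = σ ∧
    ∃ n₀ : ℕ, 1 ≤ n₀ ∧ ∀ n, n₀ ≤ n →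
      ∃ D : Set (ι → ChaconX), IsNDiagonal ι n D ∧ σ (chaconCd ι n \ D) = 0

/-- A wandering set for the `ℤ`-action `Uz`. -/
def ZWandering {α : Type*} (Uz : ℤ → α → α) (W : Set α) : Prop :=
  ∀ j k : ℤ, j ≠ k → Disjoint (Uz j '' W) (Uz k '' W)

/-- Conservativity: every measurable wandering set is null. -/
def ZConservative {α : Type*} [MeasurableSpace α] (σ : Measure α) (Uz : ℤ → α → α) : Prop :=
  ∀ W : Set α, MeasurableSet W → ZWandering Uz W → σ W = 0

/-- Total dissipativity: mod `σ`, the space is the disjoint union of the iterates of a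
wandering set. -/
def ZTotallyDissipative {α : Type*} [MeasurableSpace α] (σ : Measure α)
    (Uz : ℤ → α → α) : Prop :=
  ∃ W : Set α, MeasurableSet W ∧ ZWandering Uz W ∧ σ ((⋃ j : ℤ, Uz j '' W)ᶜ) = 0

/-- Ergodicity of a (not necessarily finite) invariant measure: every invariant
measurable set is null or conull. -/
def MeasErgodic {α : Type*} [MeasurableSpace α] (σ : Measure α) (U : α → α) : Prop :=
  ∀ A : Set α, MeasurableSet A → U ⁻¹' A = A → σ A = 0 ∨ σ Aᶜ = 0

/-- `Icc a b` is an `n`-crossing for `x`: a maximal finite set of consecutive integers `j`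
with `(T^{×ι})^j x ∈ Cₙ^ι`. -/
def IsCrossing (ι : Type) (n : ℕ) (x : ι → ChaconX) (a b : ℤ) : Prop :=
  a ≤ b ∧ (∀ j : ℤ, a ≤ j → j ≤ b → chaconTdZ ι j x ∈ chaconCd ι n) ∧
    chaconTdZ ι (a - 1) x ∉ chaconCd ι n ∧ chaconTdZ ι (b + 1) x ∉ chaconCd ι n

/-- `n(x)`: the smallest `n ≥ 1` with `x ∈ Cₙ^ι`. -/
def chaconNOf (ι : Type) (x : ι → ChaconX) : ℕ :=
  if h : ∃ n : ℕ, 1 ≤ n ∧ x ∈ chaconCd ι n then Nat.find h else 0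

/-- `B(τ)`: the points of `B` whose coordinate `i` lies in subcolumn `τ i` of tower `n`. -/
def chaconBoxTau (ι : Type) (n : ℕ) (B : Set (ι → ChaconX)) (τ : ι → ℕ) :
    Set (ι → ChaconX) :=
  {x ∈ B | ∀ i, chaconTn n (x i) = τ i}

/-- The transition from the `n`-diagonal `D` to the `(n+1)`-diagonal `D'` is the central
one, i.e. `D' = D(1,…,1)`. -/
def CentralTransition (ι : Type) (n : ℕ) (D D' : Set (ι → ChaconX)) : Prop :=
  ∀ B : Set (ι → ChaconX), IsNBox ι n B → B ⊆ D →
    chaconBoxTau ι n B (fun _ => 1) ⊆ D'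

/-- The `n`-diagonal containing a given set (junk value `∅` if there is none). -/
def diagOfBox (ι : Type) (n : ℕ) (B : Set (ι → ChaconX)) : Set (ι → ChaconX) :=
  if h : ∃ D, IsNDiagonal ι n D ∧ B ⊆ D then h.choose else ∅

/-- `D(τ)`: the `(n+1)`-diagonal containing `B(τ)` for an `n`-box `B ⊆ D`. -/
def diagTau (ι : Type) (n : ℕ) (D : Set (ι → ChaconX)) (τ : ι → ℕ) : Set (ι → ChaconX) :=
  if h : ∃ B, IsNBox ι n B ∧ B ⊆ D then diagOfBox ι (n + 1) (chaconBoxTau ι n h.choose τ)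
  else ∅

/-- A consistent family of diagonals `(Dₙ)_{n ≥ n₀}`. -/
def IsConsistentFamily (ι : Type) (n₀ : ℕ) (D : ℕ → Set (ι → ChaconX)) : Prop :=
  (∀ n, n₀ ≤ n → IsNDiagonal ι n (D n)) ∧
    (chaconCd ι (n₀ - 1) ∩ ⋂ n, ⋂ (_ : n₀ ≤ n), D n).Nonempty ∧
    ∀ n, n₀ ≤ n → D (n + 1) ∩ chaconCd ι n ⊆ D n

/-- `x` is seen by the family of diagonals `(Dₙ)_{n ≥ n₀}`. -/
def SeenByFam (ι : Type) (n₀ : ℕ) (D : ℕ → Set (ι → ChaconX)) (x : ι → ChaconX) : Prop :=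
  ∀ n, n₀ ≤ n → x ∉ chaconCd ι n ∨ x ∈ D n

/-- Graph joinings arising from powers of `T`:
`σ(A₁ × ⋯ × A_d) = α μ(T^{-k₁}A₁ ∩ ⋯ ∩ T^{-k_d}A_d)` for some `0 < α < ∞`. -/
def IsGraphJoining (ι : Type) [Fintype ι] (σ : Measure (ι → ChaconX)) : Prop :=
  ∃ (α : ℝ≥0∞) (k : ι → ℤ), 0 < α ∧ α ≠ ⊤ ∧
    ∀ A : ι → Set ChaconX, (∀ i, MeasurableSet (A i)) →
      σ (Set.univ.pi A) = α * chaconMu (⋂ i, chaconTZ (k i) ⁻¹' A i)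

/-- Ergodic components of `σ`: the nonzero boundedly finite `T^{×ι}`-invariant ergodic
measures, absolutely continuous with respect to `σ`, which appear in its ergodic
decomposition. -/
def IsErgodicComponent (ι : Type) [Fintype ι] (σ ρ : Measure (ι → ChaconX)) : Prop :=
  ρ ≠ 0 ∧ BoundedlyFinite ρ ∧ ρ.map (chaconTd ι) = ρ ∧ MeasErgodic ρ (chaconTd ι) ∧ ρ ≪ σ

end

section ChaconAux

lemma chaconH_pos (n : ℕ) : 0 < chaconH n := by
  induction n with
  | zero => simp [chaconH]
  | succ n ih => simp only [chaconH]; omega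

lemma chaconH_succ (n : ℕ) : chaconH (n+1) = 6 * chaconH n + 2 := by
  simp only [chaconH]; ring

lemma chaconL_exists_nat (n k : ℕ) : ∃ c : ℕ, chaconL n k = (c : ℝ) * (3:ℝ)⁻¹ ^ n := by
  induction n generalizing k with
  | zero => exact ⟨0, by simp [chaconL]⟩
  | succ n ih =>
    have h3 : (3:ℝ)⁻¹ ^ n = 3 * (3:ℝ)⁻¹ ^ (n+1) := by
      rw [pow_succ]; ring_nf
    rw [chaconL]
    split_ifs with h1 h2 h4 h5
    · obtain ⟨c, hc⟩ := ih k
      exact ⟨3*c, by rw [hc, h3]; push_cast; ring⟩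
    · obtain ⟨c, hc⟩ := ih (k - chaconH n)
      exact ⟨3*c+1, by rw [hc, h3]; push_cast; ring⟩
    · exact ⟨3*chaconH n, by rw [h3]; push_cast; ring⟩
    · obtain ⟨c, hc⟩ := ih (k - 2*chaconH n - 1)
      exact ⟨3*c+2, by rw [hc, h3]; push_cast; ring⟩
    · refine ⟨k, ?_⟩
      rw [h3]; ring

lemma chaconL_nonneg (n k : ℕ) : 0 ≤ chaconL n k := by
  obtain ⟨c, hc⟩ := chaconL_exists_nat n k
  rw [hc]; positivity

lemma level_L_eq {n k k' : ℕ} {x : ℝ} (h : x ∈ chaconLevel n k)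
    (h' : x ∈ chaconLevel n k') : chaconL n k = chaconL n k' := by
  obtain ⟨c, hc⟩ := chaconL_exists_nat n k
  obtain ⟨c', hc'⟩ := chaconL_exists_nat n k'
  have hp : (0:ℝ) < (3:ℝ)⁻¹ ^ n := by positivity
  simp only [chaconLevel, mem_Ico, hc, hc'] at h h' ⊢
  have h1 : c < c' + 1 := by
    by_contra hlt
    have : (c' : ℝ) + 1 ≤ c := by exact_mod_cast Nat.not_lt.mp hlt
    nlinarith [h.1, h'.2]
  have h2 : c' < c + 1 := by
    by_contra hlt
    have : (c : ℝ) + 1 ≤ c' := by exact_mod_cast Nat.not_lt.mp hlt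
    nlinarith [h'.1, h.2]
  have : c = c' := by omega
  rw [this]

end ChaconAux


section ChaconAux2

lemma chaconTn_eq {n k : ℕ} (hk : k < chaconH n) (x : ChaconX)
    (hx : (x:ℝ) ∈ chaconLevel n k) :
    chaconTn n x = 1 + (⌊((x:ℝ) - chaconL n k) * (3:ℝ) ^ (n+1)⌋).toNat := by
  have hex : ∃ k', k' < chaconH n ∧ (x:ℝ) ∈ chaconLevel n k' := ⟨k, hk, hx⟩
  rw [chaconTn, dif_pos hex]
  have hL : chaconL n hex.choose = chaconL n k := level_L_eq hex.choose_spec.2 hx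
  rw [hL]

lemma chaconTn_iff {n k : ℕ} (hk : k < chaconH n) (x : ChaconX)
    (hx : (x:ℝ) ∈ chaconLevel n k) (j : ℕ) (hj : j < 3) :
    chaconTn n x = j + 1 ↔ (x:ℝ) ∈ Ico (chaconL n k + (j:ℝ) * (3:ℝ)⁻¹ ^ (n+1))
      (chaconL n k + ((j:ℝ) + 1) * (3:ℝ)⁻¹ ^ (n+1)) := by
  rw [chaconTn_eq hk x hx]
  set L := chaconL n k with hLdef
  set y := ((x:ℝ) - L) * (3:ℝ) ^ (n+1) with hy
  have hP : (0:ℝ) < (3:ℝ) ^ (n+1) := by positivity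
  have hPinv : (3:ℝ) ^ (n+1) * (3:ℝ)⁻¹ ^ (n+1) = 1 := by
    rw [← mul_pow]; norm_num
  have h3n : (3:ℝ)⁻¹ ^ n = 3 * (3:ℝ)⁻¹ ^ (n+1) := by rw [pow_succ]; ring_nf
  simp only [chaconLevel, mem_Ico] at hx
  have hy0 : 0 ≤ y := by
    apply mul_nonneg _ hP.le; linarith [hx.1]
  have hfl0 : 0 ≤ ⌊y⌋ := Int.le_floor.mpr (by exact_mod_cast hy0)
  constructor
  · intro h
    have hfl : ⌊y⌋ = (j : ℤ) := by omega
    have hiff := Int.floor_eq_iff.mp hfl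
    have h1 : (j:ℝ) ≤ y := by exact_mod_cast hiff.1
    have h2 : y < (j:ℝ) + 1 := by exact_mod_cast hiff.2
    constructor
    · nlinarith
    · nlinarith
  · intro h
    have h1 : (j:ℝ) ≤ y := by
      rw [hy]; nlinarith [h.1]
    have h2 : y < (j:ℝ) + 1 := by
      rw [hy]; nlinarith [h.2]
    have hfl : ⌊y⌋ = (j : ℤ) := by
      rw [Int.floor_eq_iff]
      constructor
      · exact_mod_cast h1
      · exact_mod_cast h2
    omega

end ChaconAux2


section ChaconAux3

/-- Index of the level of tower `n+1` corresponding to level `k`, subcolumn `t`, of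
tower `n`. -/
def chaconStepIdx (n k t : ℕ) : ℕ :=
  if t = 1 then k else if t = 2 then k + chaconH n else k + 2 * chaconH n + 1

lemma chaconStep (n k : ℕ) (hk : k < chaconH n / 2) (t : ℕ) (ht : t = 1 ∨ t = 2 ∨ t = 3) :
    chaconStepIdx n k t < chaconH (n+1) / 2 ∧
    chaconL (n+1) (chaconStepIdx n k t)
      = chaconL n k + ((t:ℝ) - 1) * (3:ℝ)⁻¹ ^ (n+1) := by
  have hkh : k < chaconH n := lt_of_lt_of_le hk (Nat.div_le_self _ _)
  have hH : chaconH (n+1) = 6 * chaconH n + 2 := chaconH_succ n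
  rcases ht with h | h | h <;> subst h <;> simp only [chaconStepIdx] <;> norm_num
  · constructor
    · omega
    · rw [chaconL, if_pos hkh]
  · constructor
    · omega
    · rw [chaconL, if_neg (by omega), if_pos (by omega), Nat.add_sub_cancel]
      norm_num
  · constructor
    · omega
    · rw [chaconL, if_neg (by omega), if_neg (by omega), if_neg (by omega),
        if_pos (by omega)]
      have : k + 2 * chaconH n + 1 - 2 * chaconH n - 1 = k := by omega
      rw [this]
      norm_num

end ChaconAux3


section ChaconAux4

lemma chacon_coord_iff {m k : ℕ} (hk : k < chaconH m / 2) {t : ℕ}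
    (ht : t = 1 ∨ t = 2 ∨ t = 3) (x : ChaconX) :
    ((x:ℝ) ∈ chaconLevel m k ∧ chaconTn m x = t) ↔
      (x:ℝ) ∈ chaconLevel (m+1) (chaconStepIdx m k t) := by
  have hkh : k < chaconH m := lt_of_lt_of_le hk (Nat.div_le_self _ _)
  obtain ⟨hidx, hL⟩ := chaconStep m k hk t ht
  have ht1 : 1 ≤ t := by omega
  have ht3 : t ≤ 3 := by omega
  set j := t - 1 with hjdef
  have hjt : t = j + 1 := by omega
  have hj3 : j < 3 := by omega
  have hcast : (j:ℝ) = (t:ℝ) - 1 := by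
    rw [hjdef, Nat.cast_sub ht1]; norm_num
  have htr : (t:ℝ) ≤ 3 := by exact_mod_cast ht3
  have htr1 : (1:ℝ) ≤ (t:ℝ) := by exact_mod_cast ht1
  have hep : (0:ℝ) < (3:ℝ)⁻¹ ^ (m+1) := by positivity
  have h3m : (3:ℝ)⁻¹ ^ m = 3 * (3:ℝ)⁻¹ ^ (m+1) := by rw [pow_succ]; ring_nf
  constructor
  · rintro ⟨hxm, htn⟩
    have hmem := (chaconTn_iff hkh x hxm j hj3).mp (by rw [hjt] at htn; exact htn)
    simp only [chaconLevel, mem_Ico] at hmem ⊢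
    rw [hL]
    constructor
    · rw [hcast] at hmem; linarith [hmem.1]
    · rw [hcast] at hmem; linarith [hmem.2]
  · intro hx'
    simp only [chaconLevel, mem_Ico] at hx'
    rw [hL] at hx'
    have hxm : (x:ℝ) ∈ chaconLevel m k := by
      simp only [chaconLevel, mem_Ico]
      constructor
      · nlinarith [hx'.1]
      · nlinarith [hx'.2]
    refine ⟨hxm, ?_⟩
    rw [hjt]
    apply (chaconTn_iff hkh x hxm j hj3).mpr
    simp only [mem_Ico]
    rw [hcast]
    constructor
    · linarith [hx'.1]
    · linarith [hx'.2]

end ChaconAux4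


/-- **Lemma (nonempty intersections of boxes).**  Let `(τₘ)_{m ≥ m₀}` be a sequence of
`d`-tuples in `{1,2,3}^d` and define a decreasing sequence of `m`-boxes by choosing an
arbitrary `m₀`-box `B_{m₀}` and setting `B_{m+1} := Bₘ(τₘ)`.  Then `⋂ₘ Bₘ ≠ ∅` if and
only if for every `i` there exist infinitely many `m` with `τₘ(i) ∈ {1,2}`. -/
theorem chacon_intersection_of_boxes (d m₀ : ℕ) (τ : ℕ → Fin d → ℕ)
    (hτ : ∀ m i, τ m i = 1 ∨ τ m i = 2 ∨ τ m i = 3)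
    (B : ℕ → Set (Fin d → ChaconX)) (hB₀ : IsNBox (Fin d) m₀ (B m₀))
    (hBrec : ∀ m, m₀ ≤ m → B (m + 1) = chaconBoxTau (Fin d) m (B m) (τ m)) :
    (⋂ m, ⋂ (_ : m₀ ≤ m), B m).Nonempty ↔
      ∀ i : Fin d, ∀ M : ℕ, ∃ m : ℕ, M ≤ m ∧ m₀ ≤ m ∧ (τ m i = 1 ∨ τ m i = 2) := by
  classical
  obtain ⟨k₀, hk₀, hB₀eq⟩ := hB₀
  -- the level indices of the boxes
  set K : ℕ → Fin d → ℕ :=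
    fun j => Nat.rec k₀ (fun j Kj i => chaconStepIdx (m₀+j) (Kj i) (τ (m₀+j) i)) j with hK
  have hKsucc : ∀ j i, K (j+1) i = chaconStepIdx (m₀+j) (K j i) (τ (m₀+j) i) := fun j i => rfl
  have hKbound : ∀ j i, K j i < chaconH (m₀+j) / 2 := by
    intro j
    induction j with
    | zero => exact hk₀
    | succ j ih =>
      intro i
      exact (chaconStep (m₀+j) (K j i) (ih i) (τ (m₀+j) i) (hτ (m₀+j) i)).1
  -- left endpoints
  set a : ℕ → Fin d → ℝ := fun j i => chaconL (m₀+j) (K j i) with ha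
  set E : ℕ → ℝ := fun j => (3:ℝ)⁻¹ ^ (m₀+j) with hE
  have hEpos : ∀ j, 0 < E j := fun j => by positivity
  have hE3 : ∀ j, E j = 3 * E (j+1) := by
    intro j
    show (3:ℝ)⁻¹ ^ (m₀+j) = 3 * (3:ℝ)⁻¹ ^ (m₀+(j+1))
    rw [show m₀+(j+1) = (m₀+j)+1 from rfl, pow_succ]
    ring_nf
  have haRec : ∀ j i, a (j+1) i = a j i + ((τ (m₀+j) i : ℝ) - 1) * E (j+1) := by
    intro j i
    exact (chaconStep (m₀+j) (K j i) (hKbound j i) (τ (m₀+j) i) (hτ (m₀+j) i)).2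
  have hτr : ∀ m i, (1:ℝ) ≤ (τ m i : ℝ) ∧ (τ m i : ℝ) ≤ 3 := by
    intro m i
    rcases hτ m i with h | h | h <;> rw [h] <;> norm_num
  -- the boxes
  have hBeq : ∀ j, B (m₀+j) = {x : Fin d → ChaconX | ∀ i,
      ((x i : ℝ)) ∈ chaconLevel (m₀+j) (K j i)} := by
    intro j
    induction j with
    | zero => exact hB₀eq
    | succ j ih =>
      rw [show m₀ + (j+1) = (m₀+j) + 1 from rfl, hBrec (m₀+j) (by omega), ih]
      ext x
      simp only [chaconBoxTau, mem_setOf_eq, sep_setOf]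
      constructor
      · rintro ⟨h1, h2⟩ i
        exact (chacon_coord_iff (hKbound j i) (hτ (m₀+j) i) (x i)).mp ⟨h1 i, h2 i⟩
      · intro h
        constructor
        · exact fun i => ((chacon_coord_iff (hKbound j i) (hτ (m₀+j) i) (x i)).mpr (h i)).1
        · exact fun i => ((chacon_coord_iff (hKbound j i) (hτ (m₀+j) i) (x i)).mpr (h i)).2
  -- membership characterization
  have hmem : ∀ x : Fin d → ChaconX,
      x ∈ (⋂ m, ⋂ (_ : m₀ ≤ m), B m) ↔ ∀ j i, a j i ≤ ((x i : ℝ)) ∧ (x i : ℝ) < a j i + E j := by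
    intro x
    simp only [mem_iInter]
    constructor
    · intro h j i
      have := h (m₀+j) (by omega)
      rw [hBeq j] at this
      exact this i
    · intro h m hm
      rw [show m = m₀ + (m - m₀) by omega, hBeq (m - m₀)]
      intro i
      exact h (m - m₀) i
  -- monotonicity facts
  have ha_mono : ∀ j i, a j i ≤ a (j+1) i := by
    intro j i
    rw [haRec j i]
    nlinarith [(hτr (m₀+j) i).1, hEpos (j+1)]
  have haE_anti : ∀ j i, a (j+1) i + E (j+1) ≤ a j i + E j := by
    intro j i
    rw [haRec j i, hE3 j]
    nlinarith [(hτr (m₀+j) i).2, hEpos (j+1)]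
  have ha_le : ∀ i j l, j ≤ l → a j i ≤ a l i := by
    intro i j l hjl
    induction l with
    | zero =>
      have h0 : j = 0 := by omega
      rw [h0]
    | succ l ih =>
      rcases Nat.lt_or_ge j (l+1) with h | h
      · exact le_trans (ih (by omega)) (ha_mono l i)
      · have h1 : j = l + 1 := by omega
        rw [h1]
  have haE_le : ∀ i j l, j ≤ l → a l i + E l ≤ a j i + E j := by
    intro i j l hjl
    induction l with
    | zero =>
      have : j = 0 := by omega
      rw [this]
    | succ l ih =>
      rcases Nat.lt_or_ge j (l+1) with h | h
      · exact le_trans (haE_anti l i) (ih (by omega))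
      · have : j = l + 1 := by omega
        rw [this]
  constructor
  · -- forward direction
    rintro ⟨x, hx⟩ i M
    by_contra hcon
    have h3 : ∀ j, M ≤ j → τ (m₀+j) i = 3 := by
      intro j hj
      rcases hτ (m₀+j) i with h | h | h
      · exact absurd ⟨m₀+j, by omega, by omega, Or.inl h⟩ hcon
      · exact absurd ⟨m₀+j, by omega, by omega, Or.inr h⟩ hcon
      · exact h
    have hconst : ∀ j, M ≤ j → a j i + E j = a M i + E M := by
      intro j hj
      induction j with
      | zero =>
        have : M = 0 := by omega
        rw [this]
      | succ j ih =>
        rcases Nat.lt_or_ge M (j+1) with h | h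
        · have hMj : M ≤ j := by omega
          rw [← ih hMj, haRec j i, hE3 j, h3 j hMj]
          push_cast
          ring
        · have : M = j + 1 := by omega
          rw [this]
    have hxi := (hmem x).mp hx
    have hlt : (x i : ℝ) < a M i + E M := (hxi M i).2
    set δ := a M i + E M - (x i : ℝ) with hδ
    have hδpos : 0 < δ := by simp only [hδ]; linarith
    obtain ⟨N, hN⟩ := exists_pow_lt_of_lt_one hδpos (by norm_num : (3:ℝ)⁻¹ < 1)
    have hj : M ≤ max M N := le_max_left _ _
    have hEle : E (max M N) ≤ (3:ℝ)⁻¹ ^ N := by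
      apply pow_le_pow_of_le_one (by norm_num) (by norm_num)
      omega
    have hge : a M i + E M - E (max M N) ≤ (x i : ℝ) := by
      have := (hxi (max M N) i).1
      have heq := hconst (max M N) hj
      linarith
    linarith
  · -- backward direction
    intro hRHS
    have hbdd : ∀ i, BddAbove (Set.range (fun j => a j i)) := by
      intro i
      refine ⟨a 0 i + E 0, ?_⟩
      rintro y ⟨j, rfl⟩
      have := haE_le i 0 j (by omega)
      have := hEpos j
      simp only
      linarith
    set c : Fin d → ℝ := fun i => ⨆ j, a j i with hc
    have hc_ge : ∀ j i, a j i ≤ c i := fun j i => le_ciSup (hbdd i) j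
    have hc_lt : ∀ j i, c i < a j i + E j := by
      intro j i
      obtain ⟨m, hm1, hm2, hm3⟩ := hRHS i (m₀ + j)
      set l := m - m₀ with hl
      have hml : m₀ + l = m := by omega
      have hjl : j ≤ l := by omega
      have hub : c i ≤ a (l+1) i + E (l+1) := by
        apply ciSup_le
        intro j'
        calc a j' i ≤ a (max j' (l+1)) i := ha_le i j' _ (le_max_left _ _)
          _ ≤ a (max j' (l+1)) i + E (max j' (l+1)) := by linarith [hEpos (max j' (l+1))]
          _ ≤ a (l+1) i + E (l+1) := haE_le i (l+1) _ (le_max_right _ _)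
      have hτ2 : (τ (m₀+l) i : ℝ) ≤ 2 := by
        rw [hml]
        rcases hm3 with h | h <;> rw [h] <;> norm_num
      have hstep : a (l+1) i + E (l+1) ≤ a l i + E l - E (l+1) := by
        rw [haRec l i, hE3 l]
        nlinarith [hEpos (l+1)]
      have := haE_le i j l hjl
      have := hEpos (l+1)
      linarith
    have hc0 : ∀ i, (0:ℝ) ≤ c i := by
      intro i
      have := hc_ge 0 i
      have : 0 ≤ a 0 i := chaconL_nonneg _ _
      linarith [hc_ge 0 i]
    refine ⟨fun i => ⟨c i, mem_Ici.mpr (hc0 i)⟩, ?_⟩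
    apply (hmem _).mpr
    intro j i
    exact ⟨hc_ge j i, hc_lt j i⟩
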